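/- (Continuous mapping theorem) Let X, X' be separable metric spaces, f : X → X' a Borel measurable map with discontinuity set D_f, and μ_n, μ Borel probability measures on X with μ_n ⇒ μ weakly and μ(D_f) = 0. Then f_*μ_n ⇒ f_*μ weakly. -/
import Mathlib

open MeasureTheory Filter

/-- Continuous mapping theorem: if `μₙ ⇒ μ` weakly on a separable metric space `X`,
`f : X → X'` is Borel measurable with discontinuity set of `μ`-measure zero, then
`f_*μₙ ⇒ f_*μ` weakly. -/
theorem continuous_mapping_theorem {X X' : Type*}
    [MetricSpace X] [TopologicalSpace.SeparableSpace X]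
    [MeasurableSpace X] [BorelSpace X]
    [MetricSpace X'] [TopologicalSpace.SeparableSpace X']
    [MeasurableSpace X'] [BorelSpace X']
    (f : X → X') (hf : Measurable f)
    (μn : ℕ → ProbabilityMeasure X) (μ : ProbabilityMeasure X)
    (hconv : Tendsto μn atTop (nhds μ))
    (hD : (μ : Measure X) {x | ¬ ContinuousAt f x} = 0) :
    Tendsto (fun n => (μn n).map hf.aemeasurable) atTop (nhds (μ.map hf.aemeasurable)) := by
  apply MeasureTheory.tendsto_of_forall_isOpen_le_liminf
  intro G G_open
  -- key set inclusion: f ⁻¹' G ⊆ interior (f ⁻¹' G) ∪ D_f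
  have hsub : f ⁻¹' G ⊆ interior (f ⁻¹' G) ∪ {x | ¬ ContinuousAt f x} := by
    intro x hx
    by_cases hc : ContinuousAt f x
    · left
      exact mem_interior_iff_mem_nhds.2 (hc (G_open.mem_nhds hx))
    · exact Or.inr hc
  -- ENNReal-level estimate
  have h1 : (μ : Measure X) (f ⁻¹' G) ≤ (μ : Measure X) (interior (f ⁻¹' G)) := by
    calc (μ : Measure X) (f ⁻¹' G)
        ≤ (μ : Measure X) (interior (f ⁻¹' G) ∪ {x | ¬ ContinuousAt f x}) :=
          measure_mono hsub
      _ ≤ (μ : Measure X) (interior (f ⁻¹' G)) + (μ : Measure X) {x | ¬ ContinuousAt f x} :=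
          measure_union_le _ _
      _ = (μ : Measure X) (interior (f ⁻¹' G)) := by rw [hD, add_zero]
  have h2 : (μ : Measure X) (interior (f ⁻¹' G)) ≤
      atTop.liminf fun i => (μn i : Measure X) (interior (f ⁻¹' G)) :=
    MeasureTheory.ProbabilityMeasure.le_liminf_measure_open_of_tendsto hconv isOpen_interior
  have h3 : (atTop.liminf fun i => (μn i : Measure X) (interior (f ⁻¹' G))) ≤
      atTop.liminf fun i => (μn i : Measure X) (f ⁻¹' G) :=
    liminf_le_liminf (Eventually.of_forall fun i => measure_mono interior_subset)
  have key : (μ : Measure X) (f ⁻¹' G) ≤ atTop.liminf fun i => (μn i : Measure X) (f ⁻¹' G) :=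
    h1.trans (h2.trans h3)
  -- convert to NNReal statement about pushforwards
  have hmap : ∀ ν : ProbabilityMeasure X, (ν.map hf.aemeasurable) G = ν (f ⁻¹' G) := fun ν =>
    ν.map_apply hf.aemeasurable G_open.measurableSet
  simp only [hmap]
  -- coerce
  have aux : ENNReal.ofNNReal (atTop.liminf fun i => μn i (f ⁻¹' G)) =
      atTop.liminf (ENNReal.ofNNReal ∘ fun i => μn i (f ⁻¹' G)) := by
    refine Monotone.map_liminf_of_continuousAt (F := atTop) ENNReal.coe_mono
      (fun i => μn i (f ⁻¹' G)) ENNReal.continuous_coe.continuousAt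
      (IsBoundedUnder.isCoboundedUnder_ge ⟨1, by simp⟩) ⟨0, by simp⟩
  rw [← ENNReal.coe_le_coe, aux]
  simpa only [Function.comp_def, ProbabilityMeasure.ennreal_coeFn_eq_coeFn_toMeasure] using key
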